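/- If a positive integer m satisfies 0 ≤ δ(m) < 1, then m is stable, i.e., ‖3^k · m‖ = 3k + ‖m‖ for every integer k ≥ 1. -/

import Mathlib

open Real

/-- `Writes n k` means the positive integer `n` can be written using exactly `k` ones
combined by additions and multiplications. -/
inductive Writes : ℕ → ℕ → Prop
  | one : Writes 1 1
  | add {a b m n : ℕ} : Writes a m → Writes b n → Writes (a + b) (m + n)
  | mul {a b m n : ℕ} : Writes a m → Writes b n → Writes (a * b) (m + n)

/-- The integer complexity `‖n‖`: the least number of 1's needed to write `n`
using additions and multiplications. -/
noncomputable def cpx (n : ℕ) : ℕ := sInf {k | Writes n k}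

/-- The defect `δ(n) = ‖n‖ - 3 log₃ n`. -/
noncomputable def defect (n : ℕ) : ℝ := (cpx n : ℝ) - 3 * Real.logb 3 n

/-!
Writing `n` with `k` ones forces `n ^ 3 ≤ 3 ^ k`, by induction on the expression: products are
immediate, and a sum `a + b` is absorbed either by `a + b ≤ a * b` or, when one summand is `1`, by
`(b + 1) ^ 3 ≤ 3 * b ^ 3` (small `b` aside). Hence `‖n‖ ≥ 3 log₃ n`, so
`‖3 ^ k * m‖ ≥ 3 k + 3 log₃ m > 3 k + ‖m‖ - 1` when `δ(m) < 1`; multiplying by `3 ^ k` costs at most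
`3 k` ones, and integrality closes the gap.
-/

namespace Writes

theorem pos {n k : ℕ} (h : Writes n k) : 0 < n ∧ 0 < k := by
  induction h with
  | one => exact ⟨one_pos, one_pos⟩
  | add _ _ iha ihb => omega
  | mul _ _ iha ihb => exact ⟨Nat.mul_pos iha.1 ihb.1, by omega⟩

theorem self {n : ℕ} (hn : 0 < n) : Writes n n := by
  induction n with
  | zero => omega
  | succ p ih =>
    rcases Nat.eq_zero_or_pos p with rfl | hp
    · exact one
    · exact add (ih hp) one

theorem three_pow_mul {m j : ℕ} (h : Writes m j) (k : ℕ) : Writes (3 ^ k * m) (3 * k + j) := by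
  induction k with
  | zero => simpa using h
  | succ k ih =>
    have h3 := mul (self three_pos) ih
    rw [← mul_assoc, ← pow_succ'] at h3
    convert h3 using 1
    ring

end Writes

theorem succ_pow_three_le_three_pow_succ {b n : ℕ} (hb : 0 < b) (hn : 0 < n)
    (h : b ^ 3 ≤ 3 ^ n) : (b + 1) ^ 3 ≤ 3 ^ (n + 1) := by
  rcases (by omega : b = 1 ∨ b = 2 ∨ 3 ≤ b) with rfl | rfl | hb3
  · calc (1 + 1) ^ 3 ≤ 3 ^ 2 := by norm_num
      _ ≤ 3 ^ (n + 1) := Nat.pow_le_pow_right three_pos (by omega)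
  · have hn2 : 2 ≤ n := by
      by_contra! hn2
      interval_cases n
      norm_num at h
    calc (2 + 1) ^ 3 = 3 ^ 3 := by norm_num
      _ ≤ 3 ^ (n + 1) := Nat.pow_le_pow_right three_pos (by omega)
  · calc (b + 1) ^ 3 ≤ 3 * b ^ 3 := by nlinarith [Nat.mul_le_mul hb3 hb3]
      _ ≤ 3 * 3 ^ n := Nat.mul_le_mul_left 3 h
      _ = 3 ^ (n + 1) := (pow_succ' 3 n).symm

theorem add_pow_three_le_three_pow_add {a b m n : ℕ} (ha : 0 < a) (hb : 0 < b) (hm : 0 < m)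
    (hn : 0 < n) (ham : a ^ 3 ≤ 3 ^ m) (hbn : b ^ 3 ≤ 3 ^ n) : (a + b) ^ 3 ≤ 3 ^ (m + n) := by
  rcases (by omega : a = 1 ∨ b = 1 ∨ (2 ≤ a ∧ 2 ≤ b)) with rfl | rfl | ⟨ha2, hb2⟩
  · calc (1 + b) ^ 3 ≤ 3 ^ (n + 1) := add_comm 1 b ▸ succ_pow_three_le_three_pow_succ hb hn hbn
      _ ≤ 3 ^ (m + n) := Nat.pow_le_pow_right three_pos (by omega)
  · calc (a + 1) ^ 3 ≤ 3 ^ (m + 1) := succ_pow_three_le_three_pow_succ ha hm ham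
      _ ≤ 3 ^ (m + n) := Nat.pow_le_pow_right three_pos (by omega)
  · calc (a + b) ^ 3 ≤ (a * b) ^ 3 := Nat.pow_le_pow_left (by nlinarith) 3
      _ = a ^ 3 * b ^ 3 := mul_pow a b 3
      _ ≤ 3 ^ m * 3 ^ n := Nat.mul_le_mul ham hbn
      _ = 3 ^ (m + n) := (pow_add 3 m n).symm

theorem Writes.pow_three_le {n k : ℕ} (h : Writes n k) : n ^ 3 ≤ 3 ^ k := by
  induction h with
  | one => norm_num
  | add ha hb iha ihb =>
    exact add_pow_three_le_three_pow_add ha.pos.1 hb.pos.1 ha.pos.2 hb.pos.2 iha ihb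
  | @mul a b m n _ _ iha ihb =>
    calc (a * b) ^ 3 = a ^ 3 * b ^ 3 := mul_pow a b 3
      _ ≤ 3 ^ m * 3 ^ n := Nat.mul_le_mul iha ihb
      _ = 3 ^ (m + n) := (pow_add 3 m n).symm

theorem writes_cpx {n : ℕ} (hn : 0 < n) : Writes n (cpx n) :=
  Nat.sInf_mem ⟨n, Writes.self hn⟩

theorem cpx_le_of_writes {n k : ℕ} (h : Writes n k) : cpx n ≤ k := Nat.sInf_le h

theorem pow_three_le_three_pow_cpx {n : ℕ} (hn : 0 < n) : n ^ 3 ≤ 3 ^ cpx n :=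
  (writes_cpx hn).pow_three_le

theorem cpx_three_pow_mul_le {m : ℕ} (hm : 0 < m) (k : ℕ) : cpx (3 ^ k * m) ≤ 3 * k + cpx m :=
  cpx_le_of_writes ((writes_cpx hm).three_pow_mul k)

theorem three_pow_cpx_lt_of_defect_lt_one {m : ℕ} (hm : 0 < m) (h : defect m < 1) :
    3 ^ cpx m < 3 * m ^ 3 := by
  have hm' : (0 : ℝ) < m := Nat.cast_pos.2 hm
  have hlog : Real.logb 3 ((3 : ℝ) ^ cpx m) < Real.logb 3 (3 * (m : ℝ) ^ 3) := by
    rw [Real.logb_pow, Real.logb_mul (by norm_num) (by positivity), Real.logb_pow,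
      Real.logb_self_eq_one (by norm_num)]
    unfold defect at h
    push_cast
    linarith
  exact_mod_cast (Real.logb_lt_logb_iff (by norm_num) (by positivity) (by positivity)).1 hlog

theorem stable_of_defect_lt_one_general (m : ℕ) (hm : 0 < m)
    (h1 : defect m < 1) :
    ∀ k : ℕ, 1 ≤ k → cpx (3 ^ k * m) = 3 * k + cpx m := by
  intro k _
  refine le_antisymm (cpx_three_pow_mul_le hm k) ?_
  have hpos : 0 < 3 ^ k * m := by positivity
  have hlt : 3 ^ (3 * k + cpx m) < 3 ^ (cpx (3 ^ k * m) + 1) :=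
    calc 3 ^ (3 * k + cpx m) = 3 ^ (3 * k) * 3 ^ cpx m := pow_add 3 _ _
      _ < 3 ^ (3 * k) * (3 * m ^ 3) :=
          Nat.mul_lt_mul_of_pos_left (three_pow_cpx_lt_of_defect_lt_one hm h1) (by positivity)
      _ = 3 * (3 ^ k * m) ^ 3 := by ring
      _ ≤ 3 * 3 ^ cpx (3 ^ k * m) := Nat.mul_le_mul_left 3 (pow_three_le_three_pow_cpx hpos)
      _ = 3 ^ (cpx (3 ^ k * m) + 1) := (pow_succ' 3 _).symm
  have hexp := (Nat.pow_lt_pow_iff_right (by norm_num : 1 < 3)).1 hlt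
  omega

/-- If 0 ≤ δ(m) < 1 then m is stable. -/
theorem stable_of_defect_lt_one (m : ℕ) (hm : 0 < m)
    (h0 : 0 ≤ defect m) (h1 : defect m < 1) :
    ∀ k : ℕ, 1 ≤ k → cpx (3 ^ k * m) = 3 * k + cpx m :=
  stable_of_defect_lt_one_general m hm h1
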